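/- Let L be an orthomodular ortholattice. Then L satisfies the 4OA law — for all a, b, c, d ∈ L, (a →₁ d) ⊓ (a ≡(c,d) b) ≤ b →₁ d — if and only if L satisfies Day's 6-variable orthoarguesian law: for all a, b, c, d, e, f ∈ L with a ≤ bᶜ, c ≤ dᶜ, e ≤ fᶜ, one has (a ⊔ b) ⊓ (c ⊔ d) ⊓ (e ⊔ f) ≤ b ⊔ (a ⊓ (c ⊔ (((a ⊔ c) ⊓ (b ⊔ d)) ⊓ (((a ⊔ e) ⊓ (b ⊔ f)) ⊔ ((c ⊔ e) ⊓ (d ⊔ f)))))). -/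

import Mathlib

/-- An ortholattice: a bounded lattice with an orthocomplementation. -/
class Ortholattice (α : Type*) extends Lattice α, BoundedOrder α, Compl α where
  compl_compl : ∀ x : α, xᶜᶜ = x
  compl_antitone : ∀ x y : α, x ≤ y → yᶜ ≤ xᶜ
  inf_compl : ∀ x : α, x ⊓ xᶜ = ⊥
  sup_compl : ∀ x : α, x ⊔ xᶜ = ⊤

/-- The Sasaki implication `a →₁ b = aᶜ ⊔ (a ⊓ b)`. -/
def olImp1 {α : Type*} [Ortholattice α] (a b : α) : α := aᶜ ⊔ (a ⊓ b)

/-- The 3-variable orthoarguesian identity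
`a ≡c b = ((a →₁ c) ⊓ (b →₁ c)) ⊔ ((aᶜ →₁ c) ⊓ (bᶜ →₁ c))`. -/
def oa3 {α : Type*} [Ortholattice α] (c a b : α) : α :=
  (olImp1 a c ⊓ olImp1 b c) ⊔ (olImp1 aᶜ c ⊓ olImp1 bᶜ c)

/-- The 4-variable orthoarguesian identity
`a ≡(c,d) b = (a ≡d b) ⊔ ((a ≡d c) ⊓ (b ≡d c))`. -/
def oa4 {α : Type*} [Ortholattice α] (c d a b : α) : α :=
  oa3 d a b ⊔ (oa3 d a c ⊓ oa3 d b c)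

/-!
Write `φ_x s = x ⊓ (xᶜ ⊔ s)` for the Sasaki projection, so that `(x →₁ d)ᶜ = φ_x dᶜ`.
By De Morgan the 4OA law says `φ_b dᶜ ≤ φ_a dᶜ ⊔ D`, where `D` is `dayTerm`, the bracket
of Day's law, evaluated at the three orthogonal pairs `(φ_x dᶜ, φ_{xᶜ} dᶜ)` for `x = b, a, c`.
Orthomodularity gives `s ≤ φ_x s ⊔ φ_{xᶜ} s`, so Day's law for these pairs bounds `dᶜ`, and
`φ_b dᶜ = b ⊓ (bᶜ ⊔ dᶜ)` then yields 4OA. Conversely, for orthogonal pairs `(a, b), (c, d),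
(e, f)` and `m = (a ⊔ b) ⊓ (c ⊔ d) ⊓ (e ⊔ f)`, orthomodularity gives `φ_{bᶜ} m ≤ a` and
`m ≤ b ⊔ φ_{bᶜ} m` (likewise for the other pairs), so 4OA at `bᶜ, dᶜ, fᶜ` with `d := mᶜ`
yields Day's law.
-/

section DayTerm

variable {α : Type*} [Lattice α]

def dayTerm (a b c d e f : α) : α :=
  ((a ⊔ c) ⊓ (b ⊔ d)) ⊓ (((a ⊔ e) ⊓ (b ⊔ f)) ⊔ ((c ⊔ e) ⊓ (d ⊔ f)))

theorem dayTerm_mono {a b c d e f a' b' c' d' e' f' : α} (ha : a ≤ a') (hb : b ≤ b')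
    (hc : c ≤ c') (hd : d ≤ d') (he : e ≤ e') (hf : f ≤ f') :
    dayTerm a b c d e f ≤ dayTerm a' b' c' d' e' f' := by
  unfold dayTerm
  gcongr

end DayTerm

namespace Ortholattice

variable {α : Type*} [Ortholattice α] {x y : α}

theorem compl_le_compl (h : x ≤ y) : yᶜ ≤ xᶜ := compl_antitone x y h

theorem compl_le_compl_iff : yᶜ ≤ xᶜ ↔ x ≤ y :=
  ⟨fun h => by simpa only [compl_compl] using compl_le_compl h, compl_le_compl⟩

theorem le_compl_comm : x ≤ yᶜ ↔ y ≤ xᶜ := by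
  rw [← compl_le_compl_iff, compl_compl]

theorem compl_sup (x y : α) : (x ⊔ y)ᶜ = xᶜ ⊓ yᶜ := by
  refine le_antisymm (le_inf (compl_le_compl le_sup_left) (compl_le_compl le_sup_right)) ?_
  rw [le_compl_comm]
  exact sup_le (le_compl_comm.1 inf_le_left) (le_compl_comm.1 inf_le_right)

theorem compl_inf (x y : α) : (x ⊓ y)ᶜ = xᶜ ⊔ yᶜ := by
  rw [← compl_compl (xᶜ ⊔ yᶜ), compl_sup, compl_compl, compl_compl]

def sasakiProj (x y : α) : α := x ⊓ (xᶜ ⊔ y)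

theorem sasakiProj_le (x y : α) : sasakiProj x y ≤ x := inf_le_left

theorem sasakiProj_le_compl_sasakiProj_compl (x s : α) :
    sasakiProj x s ≤ (sasakiProj xᶜ s)ᶜ :=
  le_compl_comm.2 (sasakiProj_le xᶜ s) |>.trans' (sasakiProj_le x s)

theorem compl_olImp1 (x y : α) : (olImp1 x y)ᶜ = sasakiProj x yᶜ := by
  rw [olImp1, sasakiProj, compl_sup, compl_inf, compl_compl]

variable (α) in
def IsOrthomodular : Prop := ∀ a b : α, a ≤ b → a ⊔ (aᶜ ⊓ b) = b

variable (α) in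
def OA4Law : Prop := ∀ a b c d : α, olImp1 a d ⊓ oa4 c d a b ≤ olImp1 b d

variable (α) in
def DayLaw : Prop :=
  ∀ a b c d e f : α, a ≤ bᶜ → c ≤ dᶜ → e ≤ fᶜ →
    (a ⊔ b) ⊓ (c ⊔ d) ⊓ (e ⊔ f) ≤ b ⊔ (a ⊓ (c ⊔ dayTerm a b c d e f))

theorem compl_oa4 (a b c d : α) :
    (oa4 c d a b)ᶜ = dayTerm (sasakiProj b dᶜ) (sasakiProj bᶜ dᶜ) (sasakiProj a dᶜ)
      (sasakiProj aᶜ dᶜ) (sasakiProj c dᶜ) (sasakiProj cᶜ dᶜ) := by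
  simp only [oa4, oa3, dayTerm, compl_sup, compl_inf, compl_olImp1]
  ac_rfl

theorem olImp1_inf_oa4_le_iff (a b c d : α) :
    olImp1 a d ⊓ oa4 c d a b ≤ olImp1 b d ↔
      sasakiProj b dᶜ ≤ sasakiProj a dᶜ ⊔ dayTerm (sasakiProj b dᶜ) (sasakiProj bᶜ dᶜ)
        (sasakiProj a dᶜ) (sasakiProj aᶜ dᶜ) (sasakiProj c dᶜ) (sasakiProj cᶜ dᶜ) := by
  rw [← compl_le_compl_iff, compl_inf, compl_olImp1, compl_olImp1, compl_oa4]

namespace IsOrthomodular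

variable (hOM : IsOrthomodular α)
include hOM

theorem sup_sasakiProj_compl (x s : α) : x ⊔ sasakiProj xᶜ s = x ⊔ s := by
  rw [sasakiProj, compl_compl]
  exact hOM x (x ⊔ s) le_sup_left

theorem sasakiProj_of_le {x y : α} (h : y ≤ x) : sasakiProj x y = y := by
  have h' := congrArg compl (hOM xᶜ yᶜ (compl_le_compl h))
  simpa only [sasakiProj, compl_sup, compl_inf, compl_compl] using h'

theorem sasakiProj_le_of_le_compl_sup {x y s : α} (hy : y ≤ x) (hs : s ≤ xᶜ ⊔ y) :
    sasakiProj x s ≤ y :=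
  calc sasakiProj x s ≤ sasakiProj x y := inf_le_inf_left x (sup_le le_sup_left hs)
    _ = y := hOM.sasakiProj_of_le hy

theorem inf_sup_eq_of_le_compl {u v : α} (h : u ≤ vᶜ) : vᶜ ⊓ (u ⊔ v) = u := by
  simpa only [sasakiProj, compl_compl, sup_comm] using hOM.sasakiProj_of_le h

theorem sup_inf_compl_sup_le {x a b : α} (ha : a ≤ x) (hb : b ≤ xᶜ) :
    (x ⊔ b) ⊓ (xᶜ ⊔ a) ≤ a ⊔ b := by
  set y := (x ⊔ b) ⊓ (xᶜ ⊔ a)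
  have hle : a ⊔ b ≤ y :=
    sup_le (le_inf (ha.trans le_sup_left) le_sup_right)
      (le_inf le_sup_right (hb.trans le_sup_left))
  -- By orthomodularity `y = (a ⊔ b) ⊔ ((a ⊔ b)ᶜ ⊓ y)`, and the second part is below `x ⊓ xᶜ`.
  have hx : (a ⊔ b)ᶜ ⊓ y ≤ x := by
    rw [← hOM.inf_sup_eq_of_le_compl (le_compl_comm.1 hb), compl_sup]
    exact inf_le_inf inf_le_right inf_le_left
  have hxc : (a ⊔ b)ᶜ ⊓ y ≤ xᶜ := by
    rw [← hOM.inf_sup_eq_of_le_compl (compl_le_compl ha), compl_sup]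
    exact inf_le_inf inf_le_left inf_le_right
  have hbot : (a ⊔ b)ᶜ ⊓ y = ⊥ := le_bot_iff.1 ((le_inf hx hxc).trans (inf_compl x).le)
  rw [← hOM _ _ hle, hbot, sup_bot_eq]

theorem le_sasakiProj_sup_sasakiProj_compl (x s : α) :
    s ≤ sasakiProj x s ⊔ sasakiProj xᶜ s := by
  have hsup : xᶜ ⊔ sasakiProj x s = xᶜ ⊔ s := by
    simpa only [compl_compl] using hOM.sup_sasakiProj_compl xᶜ s
  calc s ≤ (x ⊔ s) ⊓ (xᶜ ⊔ s) := le_inf le_sup_right le_sup_right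
    _ = (x ⊔ sasakiProj xᶜ s) ⊓ (xᶜ ⊔ sasakiProj x s) := by
      rw [hsup, hOM.sup_sasakiProj_compl]
    _ ≤ sasakiProj x s ⊔ sasakiProj xᶜ s :=
      hOM.sup_inf_compl_sup_le (sasakiProj_le x s) (sasakiProj_le xᶜ s)

theorem oa4Law_of_dayLaw (hDay : DayLaw α) : OA4Law α := by
  intro a b c d
  rw [olImp1_inf_oa4_le_iff]
  set T := dayTerm (sasakiProj b dᶜ) (sasakiProj bᶜ dᶜ) (sasakiProj a dᶜ) (sasakiProj aᶜ dᶜ)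
    (sasakiProj c dᶜ) (sasakiProj cᶜ dᶜ)
  have hday := hDay _ _ _ _ _ _ (sasakiProj_le_compl_sasakiProj_compl b dᶜ)
    (sasakiProj_le_compl_sasakiProj_compl a dᶜ) (sasakiProj_le_compl_sasakiProj_compl c dᶜ)
  have hs : dᶜ ≤ sasakiProj bᶜ dᶜ ⊔ (sasakiProj b dᶜ ⊓ (sasakiProj a dᶜ ⊔ T)) :=
    (le_inf (le_inf (hOM.le_sasakiProj_sup_sasakiProj_compl b dᶜ)
      (hOM.le_sasakiProj_sup_sasakiProj_compl a dᶜ))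
      (hOM.le_sasakiProj_sup_sasakiProj_compl c dᶜ)).trans hday
  have hb : sasakiProj b dᶜ ≤ sasakiProj b dᶜ ⊓ (sasakiProj a dᶜ ⊔ T) :=
    hOM.sasakiProj_le_of_le_compl_sup (inf_le_left.trans (sasakiProj_le b dᶜ))
      (hs.trans (sup_le_sup_right (sasakiProj_le bᶜ dᶜ) _))
  exact hb.trans inf_le_right

theorem dayLaw_of_oa4Law (hOA : OA4Law α) : DayLaw α := by
  intro a b c d e f hab hcd hef
  set m := (a ⊔ b) ⊓ (c ⊔ d) ⊓ (e ⊔ f)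
  have hproj {u v : α} (huv : u ≤ vᶜ) (hm : m ≤ u ⊔ v) : sasakiProj vᶜ m ≤ u :=
    hOM.sasakiProj_le_of_le_compl_sup huv (by rwa [compl_compl, sup_comm])
  have hpb : sasakiProj bᶜ m ≤ a := hproj hab (inf_le_left.trans inf_le_left)
  have hpd : sasakiProj dᶜ m ≤ c := hproj hcd (inf_le_left.trans inf_le_right)
  have hpf : sasakiProj fᶜ m ≤ e := hproj hef inf_le_right
  have hoa := (olImp1_inf_oa4_le_iff dᶜ bᶜ fᶜ mᶜ).1 (hOA dᶜ bᶜ fᶜ mᶜ)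
  simp only [compl_compl] at hoa
  have hT := dayTerm_mono hpb (sasakiProj_le b m) hpd (sasakiProj_le d m) hpf (sasakiProj_le f m)
  calc m ≤ b ⊔ sasakiProj bᶜ m := (hOM.sup_sasakiProj_compl b m).ge.trans' le_sup_right
    _ ≤ b ⊔ (a ⊓ (c ⊔ dayTerm a b c d e f)) :=
      sup_le_sup_left (le_inf hpb (hoa.trans (sup_le_sup hpd hT))) b

end IsOrthomodular

end Ortholattice

/-- An orthomodular ortholattice satisfies the 4OA law iff it satisfies Day'\''s
6-variable orthoarguesian law. -/
theorem stmt_15 (α : Type*) [Ortholattice α]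
    (hOM : ∀ a b : α, a ≤ b → a ⊔ (aᶜ ⊓ b) = b) :
    (∀ a b c d : α, olImp1 a d ⊓ oa4 c d a b ≤ olImp1 b d) ↔
      (∀ a b c d e f : α, a ≤ bᶜ → c ≤ dᶜ → e ≤ fᶜ →
        (a ⊔ b) ⊓ (c ⊔ d) ⊓ (e ⊔ f) ≤
          b ⊔ (a ⊓ (c ⊔ (((a ⊔ c) ⊓ (b ⊔ d)) ⊓
            (((a ⊔ e) ⊓ (b ⊔ f)) ⊔ ((c ⊔ e) ⊓ (d ⊔ f))))))) :=
  ⟨Ortholattice.IsOrthomodular.dayLaw_of_oa4Law hOM,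
    Ortholattice.IsOrthomodular.oa4Law_of_dayLaw hOM⟩
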